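/- arXiv:2507.02553 — 3 statements merged into one kernel-verified Lean document; each statement's English description precedes it below -/
import Mathlib

section
/- If β ≠ 0, then for every λ ∈ ℂ*, α, γ ∈ ℂ and h(t) ∈ ℂ[t], the 𝔏-module Φ(λ,α,β,γ,h(t)) is irreducible (i.e., it has no 𝔏-submodules other than 0 and itself). -/
noncomputable section

/-- The polynomial ring `ℂ[s,t]`; variable `0` is `s`, variable `1` is `t`. -/
abbrev P2 : Type := MvPolynomial (Fin 2) ℂ

/-- The shift operator `f(s,t) ↦ f(s-m,t)` on `ℂ[s,t]`. -/
def shiftS (m : ℤ) : Module.End ℂ P2 :=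
  (MvPolynomial.aeval ![MvPolynomial.X 0 - MvPolynomial.C (m : ℂ), MvPolynomial.X 1] :
    P2 →ₐ[ℂ] P2).toLinearMap

/-- Multiplication by a polynomial, as a linear endomorphism of `ℂ[s,t]`. -/
def mulOp (p : P2) : Module.End ℂ P2 := LinearMap.mulLeft ℂ p

/-- The partial derivative `∂/∂t` on `ℂ[s,t]`. -/
def dT : Module.End ℂ P2 := (MvPolynomial.pderiv (1 : Fin 2)).toLinearMap

/-- The embedding `ℂ[t] → ℂ[s,t]`, `t ↦` variable `1`. -/
def toT (p : Polynomial ℂ) : P2 := Polynomial.aeval (MvPolynomial.X 1 : P2) p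

/-- The polynomial quotient `(h(t) - h(α)) / (t - α)`. -/
def hq (al : ℂ) (h : Polynomial ℂ) : Polynomial ℂ :=
  Polynomial.divByMonic (h - Polynomial.C (Polynomial.eval al h))
    (Polynomial.X - Polynomial.C al)

/-- `h_m(t) = m h(t) - m (m-1) α (h(t) - h(α))/(t - α)`. -/
def hmPoly (al : ℂ) (h : Polynomial ℂ) (m : ℤ) : Polynomial ℂ :=
  (m : ℂ) • h - ((m : ℂ) * ((m : ℂ) - 1) * al) • hq al h

/-- The action of `L_m` on `Φ(λ,α,β,γ,h)`:
`L_m · f = λ^m (s + h_m(t)) f(s-m,t) - m λ^m (t - mα) ∂_t(f(s-m,t))`. -/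
def opL (lam al : ℂ) (h : Polynomial ℂ) (m : ℤ) : Module.End ℂ P2 :=
  lam ^ m • (mulOp (MvPolynomial.X 0 + toT (hmPoly al h m)) * shiftS m)
    - ((m : ℂ) * lam ^ m) •
        (mulOp (MvPolynomial.X 1 - MvPolynomial.C ((m : ℂ) * al)) * (dT * shiftS m))

/-- The action of `M_m` on `Φ(λ,α,β,γ,h)`: `M_m · f = λ^m (t - mα) f(s-m,t)`. -/
def opM (lam al : ℂ) (m : ℤ) : Module.End ℂ P2 :=
  lam ^ m • (mulOp (MvPolynomial.X 1 - MvPolynomial.C ((m : ℂ) * al)) * shiftS m)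

/-- The action of `S_m` on `Φ(λ,α,β,γ,h)`: `S_m · f = λ^m β f(s-m,t)`. -/
def opS (lam be : ℂ) (m : ℤ) : Module.End ℂ P2 :=
  (lam ^ m * be) • shiftS m

/-- The action of `I_m` on `Φ(λ,α,β,γ,h)`:
`I_m · f = λ^m (γ - m β (h(t)-h(α))/(t-α)) f(s-m,t) + m λ^m β ∂_t(f(s-m,t))`. -/
def opI (lam al be ga : ℂ) (h : Polynomial ℂ) (m : ℤ) : Module.End ℂ P2 :=
  lam ^ m •
      (mulOp (MvPolynomial.C ga - MvPolynomial.C ((m : ℂ) * be) * toT (hq al h)) * shiftS m)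
    + ((m : ℂ) * lam ^ m * be) • (dT * shiftS m)


/-- `W` is an `𝔏`-submodule of `Φ(λ,α,β,γ,h)`: a subspace invariant under the action of all
`L_m, M_m, S_m, I_m`. -/
def IsLSubmodule (lam al be ga : ℂ) (h : Polynomial ℂ) (W : Submodule ℂ P2) : Prop :=
  ∀ (m : ℤ), ∀ f ∈ W, opL lam al h m f ∈ W ∧ opM lam al m f ∈ W ∧
    opS lam be m f ∈ W ∧ opI lam al be ga h m f ∈ W


open MvPolynomial

lemma shiftS_zero_apply (f : P2) : shiftS 0 f = f := by
  show (aeval ![X 0 - C ((0:ℤ):ℂ), X 1]) f = f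
  have hv : ![X 0 - C ((0:ℤ):ℂ), X 1] = (X : Fin 2 → P2) := by
    funext i; fin_cases i <;> simp
  rw [hv]
  exact aeval_X_left_apply f

lemma shiftS_shiftS (m n : ℤ) (f : P2) : shiftS m (shiftS n f) = shiftS (m + n) f := by
  show (aeval ![X 0 - C ((m:ℤ):ℂ), X 1]) ((aeval ![X 0 - C ((n:ℤ):ℂ), X 1]) f) = _
  rw [comp_aeval_apply]
  have hv : (fun i => (aeval ![X 0 - C ((m:ℤ):ℂ), X 1]) (![X 0 - C ((n:ℤ):ℂ), X 1] i))
      = ![(X 0 : P2) - C (((m+n:ℤ)):ℂ), X 1] := by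
    funext i; fin_cases i <;> simp <;> push_cast <;> ring
  rw [hv]; rfl

section closure
variable {lam al be ga : ℂ} {h : Polynomial ℂ} {W : Submodule ℂ P2}
variable (hlam : lam ≠ 0) (hbe : be ≠ 0) (hW : IsLSubmodule lam al be ga h W)
include hlam hbe hW

lemma mem_shift : ∀ (m : ℤ), ∀ f ∈ W, shiftS m f ∈ W := by
  intro m f hf
  have h1 := (hW m f hf).2.2.1
  have hc : (lam ^ m * be) ≠ 0 := mul_ne_zero (zpow_ne_zero _ hlam) hbe
  have : shiftS m f = (lam ^ m * be)⁻¹ • opS lam be m f := by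
    simp only [opS, LinearMap.smul_apply, smul_smul, inv_mul_cancel₀ hc, one_smul]
  rw [this]
  exact W.smul_mem _ h1

lemma mem_mulX1 : ∀ f ∈ W, (X 1 : P2) * f ∈ W := by
  intro f hf
  have h1 := (hW 0 f hf).2.1
  have : opM lam al 0 f = (X 1 : P2) * f := by
    simp [opM, mulOp, LinearMap.smul_apply, Module.End.mul_apply, LinearMap.mulLeft_apply,
      shiftS_zero_apply]
  rwa [this] at h1

lemma mem_mulX0 : ∀ f ∈ W, (X 0 : P2) * f ∈ W := by
  intro f hf
  have h1 := (hW 0 f hf).1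
  have : opL lam al h 0 f = (X 0 : P2) * f := by
    simp [opL, mulOp, hmPoly, toT, LinearMap.smul_apply, Module.End.mul_apply,
      LinearMap.sub_apply, LinearMap.mulLeft_apply, shiftS_zero_apply]
  rwa [this] at h1

lemma mem_mul : ∀ (p : P2), ∀ f ∈ W, p * f ∈ W := by
  intro p
  induction p using MvPolynomial.induction_on with
  | C a => intro f hf; rw [← smul_eq_C_mul]; exact W.smul_mem _ hf
  | add p q hp hq => intro f hf; rw [add_mul]; exact W.add_mem (hp f hf) (hq f hf)
  | mul_X p i hp =>
      intro f hf
      have hXf : (X i : P2) * f ∈ W := by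
        fin_cases i
        · exact mem_mulX0 hlam hbe hW f hf
        · exact mem_mulX1 hlam hbe hW f hf
      have := hp _ hXf
      rwa [mul_assoc]

lemma mem_dT : ∀ f ∈ W, dT f ∈ W := by
  intro f hf
  have hg : shiftS (-1) f ∈ W := mem_shift hlam hbe hW (-1) f hf
  have hg1 : shiftS 1 (shiftS (-1) f) = f := by
    rw [shiftS_shiftS]; norm_num [shiftS_zero_apply]
  have h1 := (hW 1 _ hg).2.2.2
  set p : P2 := C ga - C (((1:ℤ):ℂ) * be) * toT (hq al h) with hp
  have key : opI lam al be ga h 1 (shiftS (-1) f)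
      = lam ^ (1:ℤ) • (p * f) + (((1:ℤ):ℂ) * lam ^ (1:ℤ) * be) • dT f := by
    simp only [opI, LinearMap.add_apply, LinearMap.smul_apply, Module.End.mul_apply,
      mulOp, LinearMap.mulLeft_apply, hg1, hp]
  rw [key] at h1
  have h2 : (((1:ℤ):ℂ) * lam ^ (1:ℤ) * be) • dT f ∈ W := by
    have := W.sub_mem h1 (W.smul_mem (lam ^ (1:ℤ)) (mem_mul hlam hbe hW p f hf))
    simpa using this
  have hc : (((1:ℤ):ℂ) * lam ^ (1:ℤ) * be) ≠ 0 := by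
    simp only [Int.cast_one, one_mul, zpow_one]
    exact mul_ne_zero hlam hbe
  have := W.smul_mem (((1:ℤ):ℂ) * lam ^ (1:ℤ) * be)⁻¹ h2
  rwa [smul_smul, inv_mul_cancel₀ hc, one_smul] at this

end closure

lemma my_poly_aeval_eq_eval (z : ℂ) (q : Polynomial ℂ) : Polynomial.aeval z q = q.eval z := by
  rw [Polynomial.aeval_def, Algebra.algebraMap_self]; rfl

lemma my_aeval_eq_eval (x : Fin 2 → ℂ) (g : P2) : aeval x g = eval x g := by
  rw [aeval_def, Algebra.algebraMap_self]; rfl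

lemma eval_shiftS (x : Fin 2 → ℂ) (m : ℤ) (g : P2) :
    eval x (shiftS m g) = eval ![x 0 - m, x 1] g := by
  rw [← my_aeval_eq_eval, ← my_aeval_eq_eval]
  show (aeval x) ((aeval ![X 0 - C ((m:ℤ):ℂ), X 1]) g) = _
  rw [comp_aeval_apply]
  have hv : (fun i => (aeval x) (![X 0 - C ((m:ℤ):ℂ), X 1] i)) = ![x 0 - (m:ℂ), x 1] := by
    funext i; fin_cases i <;> simp
  rw [hv]

lemma eval_psi (a b z : ℂ) (g : P2) :
    ((aeval ![Polynomial.C a - Polynomial.X, Polynomial.C b] : P2 →ₐ[ℂ] Polynomial ℂ) g).eval z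
      = eval ![a - z, b] g := by
  rw [← my_poly_aeval_eq_eval, comp_aeval_apply, ← my_aeval_eq_eval]
  have hv : (fun i => (Polynomial.aeval z) (![Polynomial.C a - Polynomial.X, Polynomial.C b] i))
      = ![a - z, b] := by
    funext i; fin_cases i <;> simp [my_poly_aeval_eq_eval]
  rw [hv]

lemma eval_phix (x y : ℂ) (g : P2) :
    ((aeval ![Polynomial.C x, Polynomial.X] : P2 →ₐ[ℂ] Polynomial ℂ) g).eval y
      = eval ![x, y] g := by
  rw [← my_poly_aeval_eq_eval, comp_aeval_apply, ← my_aeval_eq_eval]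
  have hv : (fun i => (Polynomial.aeval y) (![Polynomial.C x, Polynomial.X] i)) = ![x, y] := by
    funext i; fin_cases i <;> simp [my_poly_aeval_eq_eval]
  rw [hv]

lemma aeval_pderiv (x : ℂ) (f : P2) :
    (aeval ![Polynomial.C x, Polynomial.X] : P2 →ₐ[ℂ] Polynomial ℂ) (pderiv 1 f)
      = Polynomial.derivative ((aeval ![Polynomial.C x, Polynomial.X] : P2 →ₐ[ℂ] Polynomial ℂ) f) := by
  induction f using MvPolynomial.induction_on with
  | C a => simp
  | add p q hp hq => simp [map_add, hp, hq]
  | mul_X p i hp =>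
      fin_cases i <;>
        simp [pderiv_mul, hp, Polynomial.derivative_mul] <;> ring

lemma aeval_dT (x : ℂ) (f : P2) :
    (aeval ![Polynomial.C x, Polynomial.X] : P2 →ₐ[ℂ] Polynomial ℂ) (dT f)
      = Polynomial.derivative ((aeval ![Polynomial.C x, Polynomial.X] : P2 →ₐ[ℂ] Polynomial ℂ) f) :=
  aeval_pderiv x f

lemma poly_zero_of_derivs (b : ℂ) (p : Polynomial ℂ)
    (h : ∀ k, (Polynomial.derivative^[k] p).eval b = 0) : p = 0 := by
  apply Polynomial.taylor_injective b
  rw [map_zero]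
  ext k
  have h3 : ((Nat.factorial k) • Polynomial.hasseDeriv k p) = Polynomial.derivative^[k] p := by
    have := congrFun (Polynomial.factorial_smul_hasseDeriv (R := ℂ) k) p
    simpa using this
  have h5 := congrArg (Polynomial.eval b) h3
  rw [h k] at h5
  have h6 : ((Nat.factorial k : ℂ)) * (Polynomial.hasseDeriv k p).eval b = 0 := by
    simpa [nsmul_eq_mul] using h5
  have h7 : (Polynomial.hasseDeriv k p).eval b = 0 := by
    rcases mul_eq_zero.1 h6 with h8 | h8
    · exact absurd h8 (by exact_mod_cast Nat.factorial_ne_zero k)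
    · exact h8
  simp [Polynomial.taylor_coeff, h7]

section main
variable {lam al be ga : ℂ} {h : Polynomial ℂ} {W : Submodule ℂ P2}
variable (hlam : lam ≠ 0) (hbe : be ≠ 0) (hW : IsLSubmodule lam al be ga h W)
include hlam hbe hW

lemma key_contr (h1 : (1:P2) ∉ W) (f₀ : P2) (hf₀W : f₀ ∈ W) (hf₀ : f₀ ≠ 0) : False := by
  let J : Ideal P2 :=
    { carrier := W
      add_mem' := fun ha hb => W.add_mem ha hb
      zero_mem' := W.zero_mem
      smul_mem' := fun c f hf => by
        rw [smul_eq_mul]; exact mem_mul hlam hbe hW c f hf }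
  have hJ : J ≠ ⊤ := (Ideal.ne_top_iff_one J).2 h1
  obtain ⟨Mx, hMmax, hJM⟩ := Ideal.exists_le_maximal J hJ
  obtain ⟨pt, hpt⟩ := isMaximal_iff_eq_vanishingIdeal_singleton.1 hMmax
  have hev : ∀ g ∈ W, eval pt g = 0 := by
    intro g hg
    have hgM : g ∈ Mx := hJM hg
    rw [hpt] at hgM
    exact (mem_vanishingIdeal_singleton_iff pt g).1 hgM
  -- every element of W vanishes on the line t = pt 1
  have hline : ∀ g ∈ W, ∀ x : ℂ, eval ![x, pt 1] g = 0 := by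
    intro g hg x
    set ψ := (aeval ![Polynomial.C (pt 0) - Polynomial.X, Polynomial.C (pt 1)] :
      P2 →ₐ[ℂ] Polynomial ℂ) with hψ
    have hr : ∀ m : ℤ, (ψ g).IsRoot (m:ℂ) := by
      intro m
      have h2 := hev _ (mem_shift hlam hbe hW m g hg)
      rw [eval_shiftS] at h2
      rw [Polynomial.IsRoot, hψ, eval_psi]
      exact h2
    have h0 : ψ g = 0 := by
      apply Polynomial.eq_zero_of_infinite_isRoot
      apply Set.Infinite.mono (s := Set.range ((↑) : ℤ → ℂ))
      · rintro _ ⟨m, rfl⟩; exact hr m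
      · exact Set.infinite_range_of_injective Int.cast_injective
    have h3 : eval ![pt 0 - (pt 0 - x), pt 1] g = 0 := by
      rw [← eval_psi, ← hψ, h0, Polynomial.eval_zero]
    rwa [sub_sub_cancel] at h3
  -- f₀ vanishes everywhere
  have hall : ∀ x y : ℂ, eval ![x, y] f₀ = 0 := by
    intro x y
    set φx := (aeval ![Polynomial.C x, Polynomial.X] : P2 →ₐ[ℂ] Polynomial ℂ) with hφ
    have hdk : ∀ k : ℕ, (⇑dT)^[k] f₀ ∈ W := by
      intro k
      induction k with
      | zero => simpa using hf₀W
      | succ n ih =>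
          rw [Function.iterate_succ_apply']
          exact mem_dT hlam hbe hW _ ih
    have hder : ∀ k : ℕ, (⇑Polynomial.derivative)^[k] (φx f₀) = φx ((⇑dT)^[k] f₀) := by
      intro k
      induction k with
      | zero => simp
      | succ n ih =>
          rw [Function.iterate_succ_apply', Function.iterate_succ_apply', ih, hφ, aeval_dT]
    have heval : ∀ k : ℕ, ((⇑Polynomial.derivative)^[k] (φx f₀)).eval (pt 1) = 0 := by
      intro k
      rw [hder k, hφ, eval_phix]
      exact hline _ (hdk k) x
    have hx0 : φx f₀ = 0 := poly_zero_of_derivs (pt 1) _ heval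
    rw [← eval_phix x y f₀, ← hφ, hx0, Polynomial.eval_zero]
  apply hf₀
  apply MvPolynomial.funext
  intro z
  have hz : ![z 0, z 1] = z := by funext i; fin_cases i <;> rfl
  rw [map_zero, ← hz]
  exact hall (z 0) (z 1)

end main


/-- If `β ≠ 0`, then for every `λ ∈ ℂ*`, `α, γ ∈ ℂ` and `h(t) ∈ ℂ[t]`, the
`𝔏`-module `Φ(λ,α,β,γ,h(t))` is irreducible: it has no `𝔏`-submodules other than `0` and
itself. -/
theorem stmt2 (lam : ℂ) (hlam : lam ≠ 0) (al be : ℂ) (hbe : be ≠ 0) (ga : ℂ)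
    (h : Polynomial ℂ) (W : Submodule ℂ P2) (hW : IsLSubmodule lam al be ga h W) :
    W = ⊥ ∨ W = ⊤ := by
  by_cases hbot : W = ⊥
  · exact Or.inl hbot
  · right
    obtain ⟨f₀, hf₀W, hf₀⟩ := (Submodule.ne_bot_iff W).1 hbot
    have h1W : (1:P2) ∈ W := by
      by_contra h1
      exact key_contr hlam hbe hW h1 f₀ hf₀W hf₀
    rw [eq_top_iff]
    intro p _
    simpa using mem_mul hlam hbe hW p 1 h1W


end
end

section
/- If α = β = 0, then for every λ ∈ ℂ*, γ ∈ ℂ, h(t) ∈ ℂ[t] and every i ∈ ℕ, the subspace t^i ℂ[s,t] is an 𝔏-submodule of Φ(λ,0,0,γ,h(t)); in particular, for i ≥ 1 it is a proper nonzero submodule, so Φ(λ,0,0,γ,h(t)) is not irreducible. -/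
noncomputable section

lemma shiftS_mul (m : ℤ) (p q : P2) : shiftS m (p * q) = shiftS m p * shiftS m q := by
  simp [shiftS]

lemma dT_mul (p q : P2) : dT (p * q) = dT p * q + p * dT q := by
  simp [dT, MvPolynomial.pderiv_mul]; ring

lemma X1_dT_pow (i : ℕ) :
    (MvPolynomial.X 1 : P2) * dT ((MvPolynomial.X 1 : P2) ^ i) =
      (i : ℂ) • (MvPolynomial.X 1 : P2) ^ i := by
  induction i with
  | zero => simp [dT]
  | succ n ih =>
    have h1 : dT (MvPolynomial.X 1 : P2) = 1 := by simp [dT]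
    rw [pow_succ, dT_mul, h1, mul_one, mul_add, ← mul_assoc, ih, smul_mul_assoc, ← pow_succ,
      ← pow_succ']
    push_cast
    rw [add_smul, one_smul]

lemma dT_pow_mul (i : ℕ) (g : P2) :
    (MvPolynomial.X 1 : P2) * dT ((MvPolynomial.X 1 : P2) ^ i * g) =
      (MvPolynomial.X 1 : P2) ^ i * ((i : ℂ) • g + (MvPolynomial.X 1 : P2) * dT g) := by
  rw [dT_mul, mul_add, ← mul_assoc, X1_dT_pow, smul_mul_assoc, mul_add, mul_smul_comm,
    ← mul_assoc, mul_comm (MvPolynomial.X 1 : P2) ((MvPolynomial.X 1 : P2)^i), mul_assoc]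

lemma shiftS_pow_mul (m : ℤ) (i : ℕ) (g : P2) :
    shiftS m ((MvPolynomial.X 1 : P2) ^ i * g) =
      (MvPolynomial.X 1 : P2) ^ i * shiftS m g := by
  rw [shiftS_mul]; congr 1; simp [shiftS]

/-- If `α = β = 0`, then for every `λ ∈ ℂ*`, `γ ∈ ℂ`, `h(t) ∈ ℂ[t]` and every
`i ∈ ℕ`, the subspace `tⁱ ℂ[s,t]` is an `𝔏`-submodule of `Φ(λ,0,0,γ,h(t))`; for `i ≥ 1` it is
a proper nonzero submodule, so `Φ(λ,0,0,γ,h(t))` is not irreducible. -/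
theorem stmt3 (lam : ℂ) (hlam : lam ≠ 0) (ga : ℂ) (h : Polynomial ℂ) :
    (∀ i : ℕ,
      IsLSubmodule lam 0 0 ga h (LinearMap.range (mulOp ((MvPolynomial.X 1 : P2) ^ i)))) ∧
    (∀ i : ℕ, 1 ≤ i →
      LinearMap.range (mulOp ((MvPolynomial.X 1 : P2) ^ i)) ≠ ⊥ ∧
      LinearMap.range (mulOp ((MvPolynomial.X 1 : P2) ^ i)) ≠ ⊤) ∧
    ¬ (∀ W : Submodule ℂ P2, IsLSubmodule lam 0 0 ga h W → W = ⊥ ∨ W = ⊤) := by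
  have key : ∀ i : ℕ,
      IsLSubmodule lam 0 0 ga h (LinearMap.range (mulOp ((MvPolynomial.X 1 : P2) ^ i))) := by
    intro i m f hf
    obtain ⟨g, hg⟩ := hf
    simp only [mulOp, LinearMap.mulLeft_apply] at hg
    subst hg
    refine ⟨⟨lam ^ m • ((MvPolynomial.X 0 + toT (hmPoly 0 h m)) * shiftS m g)
        - ((m : ℂ) * lam ^ m) • ((i : ℂ) • shiftS m g + (MvPolynomial.X 1 : P2) * dT (shiftS m g)),
        ?_⟩, ⟨lam ^ m • ((MvPolynomial.X 1 : P2) * shiftS m g), ?_⟩, ?_, 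
        ⟨lam ^ m • (MvPolynomial.C ga * shiftS m g), ?_⟩⟩
    · simp only [opL, mulOp, LinearMap.mulLeft_apply, LinearMap.sub_apply, LinearMap.smul_apply,
        Module.End.mul_apply, shiftS_pow_mul, mul_zero, MvPolynomial.C_0, sub_zero]
      rw [dT_pow_mul]
      rw [mul_sub, mul_smul_comm, mul_smul_comm]
      ring_nf
    · simp only [opM, mulOp, LinearMap.mulLeft_apply, LinearMap.smul_apply,
        Module.End.mul_apply, shiftS_pow_mul, mul_zero, MvPolynomial.C_0, sub_zero]
      rw [mul_smul_comm]
      ring_nf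
    · simp only [opS, mul_zero, zero_smul, LinearMap.zero_apply]
      exact Submodule.zero_mem _
    · simp only [opI, mulOp, LinearMap.mulLeft_apply, LinearMap.add_apply, LinearMap.smul_apply,
        Module.End.mul_apply, shiftS_pow_mul, mul_zero, zero_smul, MvPolynomial.C_0, zero_mul,
        sub_zero, add_zero, LinearMap.zero_apply]
      rw [mul_smul_comm]
      ring_nf
  refine ⟨key, ?_, ?_⟩
  · intro i hi
    constructor
    · rw [Submodule.ne_bot_iff]
      refine ⟨(MvPolynomial.X 1 : P2) ^ i, ⟨1, by simp [mulOp]⟩, ?_⟩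
      exact pow_ne_zero _ (MvPolynomial.X_ne_zero 1)
    · intro htop
      have h1 : (1 : P2) ∈ LinearMap.range (mulOp ((MvPolynomial.X 1 : P2) ^ i)) := by
        rw [htop]; trivial
      obtain ⟨g, hg⟩ := h1
      simp only [mulOp, LinearMap.mulLeft_apply] at hg
      have := congrArg (MvPolynomial.eval (fun _ => (0 : ℂ))) hg
      simp [zero_pow (by omega : i ≠ 0)] at this
  · intro H
    rcases H _ (key 1) with hb | ht
    · exact ((by
        rw [Submodule.ne_bot_iff]
        refine ⟨(MvPolynomial.X 1 : P2) ^ 1, ⟨1, by simp [mulOp]⟩, ?_⟩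
        exact pow_ne_zero _ (MvPolynomial.X_ne_zero 1) :
        LinearMap.range (mulOp ((MvPolynomial.X 1 : P2) ^ 1)) ≠ ⊥)) hb
    · have h1 : (1 : P2) ∈ LinearMap.range (mulOp ((MvPolynomial.X 1 : P2) ^ 1)) := by
        rw [ht]; trivial
      obtain ⟨g, hg⟩ := h1
      simp only [mulOp, LinearMap.mulLeft_apply] at hg
      have := congrArg (MvPolynomial.eval (fun _ => (0 : ℂ))) hg
      simp at this


end
end

section
/- Let λ, λ′ ∈ ℂ*, α, α′, β, β′, γ, γ′ ∈ ℂ and h(t), q(t) ∈ ℂ[t]. Then the 𝔏-modules Φ(λ,α,β,γ,h(t)) and Φ(λ′,α′,β′,γ′,q(t)) are isomorphic if and only if (λ,α,β,γ,h(t)) = (λ′,α′,β′,γ′,q(t)). -/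
noncomputable section

open MvPolynomial

lemma shiftS_zero : shiftS 0 = LinearMap.id := by
  have : (MvPolynomial.aeval ![MvPolynomial.X 0 - MvPolynomial.C ((0:ℤ) : ℂ), MvPolynomial.X 1] :
      P2 →ₐ[ℂ] P2) = AlgHom.id ℂ P2 := by
    apply MvPolynomial.algHom_ext; intro i; fin_cases i <;> simp
  unfold shiftS; rw [this]; rfl

lemma shiftS_one (m : ℤ) : shiftS m 1 = 1 := by simp [shiftS]

lemma dT_one : dT (1 : P2) = 0 := by simp [dT]

lemma opL_zero (lam al : ℂ) (h : Polynomial ℂ) :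
    opL lam al h 0 = mulOp (MvPolynomial.X 0) := by
  unfold opL hmPoly
  simp only [Int.cast_zero, zero_smul, zero_mul, mul_zero, zero_sub, neg_zero, sub_zero,
    zpow_zero, one_smul, shiftS_zero, smul_zero]
  unfold toT
  refine LinearMap.ext fun f => ?_
  simp [Module.End.mul_apply]

lemma opM_zero (lam al : ℂ) : opM lam al 0 = mulOp (MvPolynomial.X 1) := by
  unfold opM
  simp only [Int.cast_zero, zero_mul, map_zero, sub_zero, zpow_zero, one_smul, shiftS_zero]
  refine LinearMap.ext fun f => ?_
  simp [Module.End.mul_apply]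

lemma opS_zero (lam be : ℂ) : opS lam be 0 = be • LinearMap.id := by
  unfold opS
  simp [shiftS_zero]

lemma opI_zero (lam al be ga : ℂ) (h : Polynomial ℂ) :
    opI lam al be ga h 0 = ga • LinearMap.id := by
  unfold opI
  simp only [Int.cast_zero, zero_mul, map_zero, zero_smul, add_zero, zpow_zero, one_smul,
    shiftS_zero, zero_sub, neg_zero, sub_zero]
  refine LinearMap.ext fun f => ?_
  simp [Module.End.mul_apply, mulOp, MvPolynomial.C_mul' (a := ga)]

lemma unit_is_C (u : P2) (hu : IsUnit u) : ∃ c : ℂ, u = MvPolynomial.C c := by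
  set E := MvPolynomial.finSuccEquiv ℂ 1
  have h1 : IsUnit (E u) := hu.map E
  obtain ⟨r, hr, hCr⟩ := Polynomial.isUnit_iff.mp h1
  set E' := MvPolynomial.finSuccEquiv ℂ 0
  obtain ⟨r', hr', hCr'⟩ := Polynomial.isUnit_iff.mp (hr.map E')
  obtain ⟨c, hc⟩ : ∃ c : ℂ, r' = MvPolynomial.C c := ⟨_, (MvPolynomial.eq_C_of_isEmpty r')⟩
  refine ⟨c, ?_⟩
  have hr2 : r = MvPolynomial.C c := by
    apply E'.injective
    rw [← hCr', hc]
    simp [E', MvPolynomial.finSuccEquiv_apply]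
  apply E.injective
  rw [← hCr, hr2]
  simp [E, MvPolynomial.finSuccEquiv_apply]

lemma toT_inj : Function.Injective toT := by
  intro p q hpq
  have := congrArg (MvPolynomial.aeval (R := ℂ) ![(0 : Polynomial ℂ), Polynomial.X]) hpq
  simpa [toT, ← Polynomial.aeval_algHom_apply] using this

lemma e_mul (e : P2 ≃ₗ[ℂ] P2)
    (h0 : ∀ f, e (MvPolynomial.X 0 * f) = MvPolynomial.X 0 * e f)
    (h1 : ∀ f, e (MvPolynomial.X 1 * f) = MvPolynomial.X 1 * e f) :
    ∀ p f : P2, e (p * f) = p * e f := by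
  intro p
  induction p using MvPolynomial.induction_on with
  | C a => intro f; rw [MvPolynomial.C_mul', map_smul, MvPolynomial.C_mul']
  | add p r hp hr => intro f; rw [add_mul, map_add, hp, hr, add_mul]
  | mul_X p i hp =>
    intro f
    fin_cases i <;> simp only [Fin.isValue, Fin.mk_one, Fin.zero_eta]
    · rw [show p * MvPolynomial.X 0 * f = MvPolynomial.X 0 * (p * f) by ring, h0, hp,
        show (MvPolynomial.X 0 : P2) * (p * e f) = p * MvPolynomial.X 0 * e f by ring]
    · rw [show p * MvPolynomial.X 1 * f = MvPolynomial.X 1 * (p * f) by ring, h1, hp,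
        show (MvPolynomial.X 1 : P2) * (p * e f) = p * MvPolynomial.X 1 * e f by ring]

lemma hmPoly_one (al : ℂ) (h : Polynomial ℂ) : hmPoly al h 1 = h := by
  simp [hmPoly]

/-- The `𝔏`-modules `Φ(λ,α,β,γ,h(t))` and `Φ(λ',α',β',γ',q(t))` are
isomorphic (there is a `ℂ`-linear equivalence intertwining the actions of all basis elements
of `𝔏`) if and only if `(λ,α,β,γ,h(t)) = (λ',α',β',γ',q(t))`. -/
theorem stmt5 (lam lam' : ℂ) (hlam : lam ≠ 0) (hlam' : lam' ≠ 0)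
    (al al' be be' ga ga' : ℂ) (h q : Polynomial ℂ) :
    (∃ e : P2 ≃ₗ[ℂ] P2,
      (∀ (m : ℤ) (f : P2), e (opL lam al h m f) = opL lam' al' q m (e f)) ∧
      (∀ (m : ℤ) (f : P2), e (opM lam al m f) = opM lam' al' m (e f)) ∧
      (∀ (m : ℤ) (f : P2), e (opS lam be m f) = opS lam' be' m (e f)) ∧
      (∀ (m : ℤ) (f : P2), e (opI lam al be ga h m f) = opI lam' al' be' ga' q m (e f))) ↔
    (lam = lam' ∧ al = al' ∧ be = be' ∧ ga = ga' ∧ h = q) := by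
  constructor
  · rintro ⟨e, hLe, hMe, hSe, hIe⟩
    have h0 : ∀ f, e (MvPolynomial.X 0 * f) = MvPolynomial.X 0 * e f := by
      intro f
      have := hLe 0 f
      rw [opL_zero, opL_zero] at this
      simpa [mulOp] using this
    have h1 : ∀ f, e (MvPolynomial.X 1 * f) = MvPolynomial.X 1 * e f := by
      intro f
      have := hMe 0 f
      rw [opM_zero, opM_zero] at this
      simpa [mulOp] using this
    have hmul := e_mul e h0 h1
    have hef : ∀ f : P2, e f = f * e 1 := fun f => by
      conv_lhs => rw [← mul_one f]
      rw [hmul]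
    obtain ⟨g, hg⟩ := e.surjective 1
    have hunit : IsUnit (e 1) := IsUnit.of_mul_eq_one g (by rw [mul_comm, ← hef g, hg])
    obtain ⟨c, hc⟩ := unit_is_C _ hunit
    have hcne : c ≠ 0 := by
      intro hc0
      have : e 1 = e 0 := by rw [hc, hc0, map_zero, map_zero]
      exact one_ne_zero (e.injective this)
    have hefc : ∀ f : P2, e f = c • f := fun f => by
      rw [hef, hc, mul_comm, MvPolynomial.C_mul']
    have key : ∀ A A' : Module.End ℂ P2, (∀ f, e (A f) = A' (e f)) → A = A' := by
      intro A A' hAA'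
      refine LinearMap.ext fun f => ?_
      have := hAA' f
      rw [hefc, hefc, map_smul] at this
      exact smul_right_injective P2 hcne this
    -- lambda and alpha
    have hM1 := LinearMap.congr_fun (key _ _ (hMe 1)) 1
    simp only [opM, LinearMap.smul_apply, Module.End.mul_apply, shiftS_one, zpow_one,
      Int.cast_one, one_mul, mulOp, LinearMap.mulLeft_apply, mul_one] at hM1
    have hz : ∀ z : ℂ, lam * (z - al) = lam' * (z - al') := by
      intro z
      have := congrArg (MvPolynomial.eval ![(0 : ℂ), z]) hM1
      simpa [MvPolynomial.smul_eq_C_mul] using this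
    have hlameq : lam = lam' := by
      have e1 := hz 1; have e0 := hz 0
      linear_combination e1 - e0
    have haleq : al = al' := by
      have e0 := hz 0
      rw [hlameq] at e0
      have := mul_left_cancel₀ hlam' e0
      simpa using this
    -- h = q
    have hL1 := LinearMap.congr_fun (key _ _ (hLe 1)) 1
    simp only [opL, LinearMap.sub_apply, LinearMap.smul_apply, Module.End.mul_apply, shiftS_one,
      dT_one, zpow_one, Int.cast_one, one_mul, mulOp, LinearMap.mulLeft_apply, mul_one,
      hmPoly_one, map_zero, mul_zero, smul_zero, sub_zero] at hL1
    rw [hlameq] at hL1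
    have hXeq := smul_right_injective P2 hlam' hL1
    have hheq : h = q := toT_inj (by linear_combination (norm := ring_nf) hXeq)
    -- beta
    have hS0 := LinearMap.congr_fun (key _ _ (hSe 0)) 1
    rw [opS_zero, opS_zero] at hS0
    simp only [LinearMap.smul_apply, LinearMap.id_apply] at hS0
    have hbeeq : be = be' := smul_left_injective ℂ (one_ne_zero) hS0
    -- gamma
    have hI0 := LinearMap.congr_fun (key _ _ (hIe 0)) 1
    rw [opI_zero, opI_zero] at hI0
    simp only [LinearMap.smul_apply, LinearMap.id_apply] at hI0
    have hgaeq : ga = ga' := smul_left_injective ℂ (one_ne_zero) hI0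
    exact ⟨hlameq, haleq, hbeeq, hgaeq, hheq⟩
  · rintro ⟨rfl, rfl, rfl, rfl, rfl⟩
    exact ⟨LinearEquiv.refl ℂ P2, fun m f => rfl, fun m f => rfl, fun m f => rfl, fun m f => rfl⟩


end
end
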